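/- arXiv:1601.03276 — 2 statements merged into one kernel-verified Lean document; each statement's English description precedes it below -/
import Mathlib

section
/- Let f : ℕ → [0,∞) be a function such that for all r, s ∈ ℕ with f(r) > 0 one has f(r+s) ≥ f(s). Fix a real number k > 0 and define g : ℕ → [0,∞] by g(r) := limsup_{m→∞} f(mr)/m^k. Then for all positive integers c and r one has g(cr) = c^k · g(r). -/
open Filter Topology
open scoped NNReal ENNReal

/-!
Write `a n = f (n r) / n ^ k`. Rescaling gives `g (c r) = c ^ k * limsup_m a (m c)`, so it
suffices that the multiples of `c` carry the whole limsup of `a`. The support of `n ↦ f (n r)` is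
closed under addition and `f (· r)` grows under shifts by its elements. Shifting a support element
`n` by a fixed support element in the residue class of `-n` modulo `c` lands on a multiple of `c`;
as there are only `c` residues, every `n` is followed within a bounded distance `B` by some `m c`
with `f (n r) ≤ f (m c r)`. Since `(m c / n) ^ k → 1`, this yields `limsup a ≤ limsup_m a (m c)`.
-/

namespace ENNReal

theorem div_rpow_eq_rpow_mul_div_mul_rpow (X : ℝ≥0∞) {m c : ℝ≥0∞} (hm : m ≠ ⊤)
    (hc₀ : c ≠ 0) (hc : c ≠ ⊤) (k : ℝ) :
    X / m ^ k = c ^ k * (X / (m * c) ^ k) := by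
  have hck₀ : c ^ k ≠ 0 := (rpow_pos (pos_iff_ne_zero.2 hc₀) hc).ne'
  have hck : c ^ k ≠ ⊤ := rpow_ne_top_of_nonneg' (pos_iff_ne_zero.2 hc₀) hc
  rw [mul_rpow_of_ne_top hm hc, ← mul_div_assoc, mul_comm (c ^ k) X,
    ENNReal.mul_div_mul_right _ _ hck₀ hck]

theorem div_rpow_eq_div_rpow_mul_div_rpow (X : ℝ≥0∞) {x y : ℝ≥0∞} (hx₀ : x ≠ 0) (hx : x ≠ ⊤)
    (hy₀ : y ≠ 0) (hy : y ≠ ⊤) (k : ℝ) :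
    X / y ^ k = (x / y) ^ k * (X / x ^ k) := by
  have := div_rpow_eq_rpow_mul_div_mul_rpow X hy (ENNReal.div_ne_zero.2 ⟨hx₀, hy⟩)
    (ENNReal.div_ne_top hx hy₀) k
  rwa [ENNReal.mul_div_cancel hy₀ hy] at this

theorem tendsto_natCast_div_self_of_le_of_le_add {ψ : ℕ → ℕ} {B : ℕ}
    (hψ : ∀ n, n ≤ ψ n ∧ ψ n ≤ n + B) :
    Tendsto (fun n => (ψ n : ℝ≥0∞) / n) atTop (𝓝 1) := by
  have hupper : Tendsto (fun n : ℕ => 1 + (B : ℝ≥0∞) * (n : ℝ≥0∞)⁻¹) atTop (𝓝 1) := by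
    simpa using tendsto_const_nhds.add
      (ENNReal.Tendsto.const_mul ENNReal.tendsto_inv_nat_nhds_zero (Or.inr (natCast_ne_top B)))
  refine tendsto_of_tendsto_of_tendsto_of_le_of_le' tendsto_const_nhds hupper ?_ ?_
  · filter_upwards [eventually_ne_atTop 0] with n hn
    rw [ENNReal.le_div_iff_mul_le (Or.inl (by simpa using hn)) (Or.inl (by simp)), one_mul]
    exact_mod_cast (hψ n).1
  · filter_upwards [eventually_ne_atTop 0] with n hn
    calc (ψ n : ℝ≥0∞) / n ≤ ((n + B : ℕ) : ℝ≥0∞) / n := by gcongr; exact_mod_cast (hψ n).2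
      _ = 1 + B * (n : ℝ≥0∞)⁻¹ := by
        rw [Nat.cast_add, ENNReal.add_div, ENNReal.div_self (by simpa using hn) (by simp),
          div_eq_mul_inv]

theorem limsup_div_rpow_le_limsup_comp {b : ℕ → ℝ≥0∞} {ψ : ℕ → ℕ} {B : ℕ}
    (hψ : ∀ n, n ≤ ψ n ∧ ψ n ≤ n + B) (hb : ∀ n, b n ≤ b (ψ n)) (k : ℝ) :
    limsup (fun n => b n / (n : ℝ≥0∞) ^ k) atTop
      ≤ limsup (fun n => b (ψ n) / (ψ n : ℝ≥0∞) ^ k) atTop := by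
  set ratio := fun n => ((ψ n : ℝ≥0∞) / n) ^ k
  have hratio : limsup ratio atTop = 1 := by
    have h := (((continuous_rpow_const (y := k)).tendsto 1).comp
      (tendsto_natCast_div_self_of_le_of_le_add hψ)).limsup_eq
    rwa [one_rpow] at h
  calc limsup (fun n => b n / (n : ℝ≥0∞) ^ k) atTop
      ≤ limsup (ratio * fun n => b (ψ n) / (ψ n : ℝ≥0∞) ^ k) atTop := by
        refine limsup_le_limsup ?_
        filter_upwards [eventually_ne_atTop 0] with n hn
        have hψn : ψ n ≠ 0 := by have := (hψ n).1; omega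
        calc b n / (n : ℝ≥0∞) ^ k ≤ b (ψ n) / (n : ℝ≥0∞) ^ k := by gcongr; exact hb n
          _ = _ := div_rpow_eq_div_rpow_mul_div_rpow _ (by simpa using hψn) (natCast_ne_top _)
              (by simpa using hn) (natCast_ne_top _) k
    _ ≤ limsup ratio atTop * limsup (fun n => b (ψ n) / (ψ n : ℝ≥0∞) ^ k) atTop :=
        limsup_mul_le' (by simp [hratio]) (by simp [hratio])
    _ = _ := by rw [hratio, one_mul]

end ENNReal

section ShiftMonotone

variable {b : ℕ → ℝ≥0} (hb : ∀ s n, 0 < b s → b n ≤ b (s + n))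
include hb

theorem apply_mul_pos {w : ℕ} (hw : 0 < b w) {j : ℕ} (hj : 0 < j) : 0 < b (j * w) := by
  induction j with
  | zero => omega
  | succ j ih =>
    rcases Nat.eq_zero_or_pos j with rfl | hj
    · simpa using hw
    · calc 0 < b (j * w) := ih hj
        _ ≤ b (w + j * w) := hb w _ hw
        _ = b ((j + 1) * w) := by ring_nf

theorem exists_apply_pos_dvd_add {c : ℕ} (hc : 0 < c) (i : ℕ) :
    ∃ s, ∀ n, 0 < b n → n % c = i → 0 < b s ∧ c ∣ s + n := by
  by_cases h : ∃ w, 0 < b w ∧ w % c = i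
  · obtain ⟨w, hw, rfl⟩ := h
    -- `(2c - 1) w` lies in the support and `(2c - 1) w + n ≡ 2 c w ≡ 0 [MOD c]`
    refine ⟨(2 * c - 1) * w, fun n _ hn => ⟨apply_mul_pos hb hw (by omega), ?_⟩⟩
    have hsw : (2 * c - 1) * w + w = c * (2 * w) := by
      rw [← Nat.succ_mul, Nat.succ_eq_add_one, Nat.sub_add_cancel (by omega)]; ring
    exact ((Nat.ModEq.add_left _ hn).dvd_iff dvd_rfl).2 (hsw ▸ dvd_mul_right c _)
  · exact ⟨0, fun n hn hni => absurd ⟨n, hn, hni⟩ h⟩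

theorem exists_mul_le_add_and_apply_le {c : ℕ} (hc : 0 < c) :
    ∃ B, ∀ n, ∃ m, n ≤ m * c ∧ m * c ≤ n + B ∧ b n ≤ b (m * c) := by
  choose s hs using exists_apply_pos_dvd_add hb hc
  refine ⟨c + (Finset.range c).sup s, fun n => ?_⟩
  have hsup : s (n % c) ≤ (Finset.range c).sup s :=
    Finset.le_sup (Finset.mem_range.2 (Nat.mod_lt n hc))
  rcases eq_zero_or_pos (b n) with hn | hn
  · refine ⟨n / c + 1, ?_, ?_, by simp [hn]⟩ <;> rw [add_mul, one_mul]
    · exact (Nat.lt_div_mul_add hc).le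
    · have := Nat.div_mul_le_self n c
      omega
  · obtain ⟨hspos, hdvd⟩ := hs (n % c) n hn rfl
    refine ⟨(s (n % c) + n) / c, ?_, ?_, ?_⟩ <;> rw [Nat.div_mul_cancel hdvd]
    · omega
    · omega
    · exact hb _ n hspos

theorem limsup_comp_mul_div_rpow_eq {c : ℕ} (hc : 0 < c) (k : ℝ) :
    limsup (fun m => (b (m * c) : ℝ≥0∞) / ((m * c : ℕ) : ℝ≥0∞) ^ k) atTop
      = limsup (fun n => (b n : ℝ≥0∞) / (n : ℝ≥0∞) ^ k) atTop := by
  set F := fun n => (b n : ℝ≥0∞) / (n : ℝ≥0∞) ^ k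
  refine le_antisymm (Tendsto.limsup_comp_le_limsup (f := atTop) (u := F)
    (tendsto_atTop_mono (fun n => Nat.le_mul_of_pos_right n hc) tendsto_id)) ?_
  obtain ⟨B, hB⟩ := exists_mul_le_add_and_apply_le hb hc
  choose φ hφ using hB
  have hφ_tendsto : Tendsto φ atTop atTop :=
    tendsto_atTop_atTop.2 fun a => ⟨a * c, fun n hn =>
      Nat.le_of_mul_le_mul_right (hn.trans (hφ n).1) hc⟩
  calc limsup F atTop
      ≤ limsup (fun n => (b (φ n * c) : ℝ≥0∞) / ((φ n * c : ℕ) : ℝ≥0∞) ^ k) atTop :=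
        ENNReal.limsup_div_rpow_le_limsup_comp (fun n => ⟨(hφ n).1, (hφ n).2.1⟩)
          (fun n => by exact_mod_cast (hφ n).2.2) k
    _ ≤ _ := hφ_tendsto.limsup_comp_le_limsup
          (u := fun m => (b (m * c) : ℝ≥0∞) / ((m * c : ℕ) : ℝ≥0∞) ^ k)

end ShiftMonotone

theorem limsup_homogeneity_general
    (f : ℕ → ℝ≥0) (hf : ∀ r s : ℕ, 0 < f r → f s ≤ f (r + s))
    (k : ℝ)
    (g : ℕ → ℝ≥0∞)
    (hg : ∀ r : ℕ, g r =
      Filter.limsup (fun m : ℕ => (f (m * r) : ℝ≥0∞) / (m : ℝ≥0∞) ^ k) Filter.atTop)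
    (c r : ℕ) (hc : 0 < c) :
    g (c * r) = (c : ℝ≥0∞) ^ k * g r := by
  have hfr : ∀ s n, 0 < f (s * r) → f (n * r) ≤ f ((s + n) * r) := fun s n hs => by
    simpa only [add_mul] using hf _ _ hs
  have hc₀ : (c : ℝ≥0∞) ≠ 0 := by exact_mod_cast hc.ne'
  calc g (c * r)
      = limsup (fun m => (c : ℝ≥0∞) ^ k * ((f (m * c * r) : ℝ≥0∞) / ((m * c : ℕ) : ℝ≥0∞) ^ k))
          atTop := by
        simp_rw [hg, Nat.cast_mul, ← ENNReal.div_rpow_eq_rpow_mul_div_mul_rpow _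
          (ENNReal.natCast_ne_top _) hc₀ (ENNReal.natCast_ne_top c), mul_assoc]
    _ = (c : ℝ≥0∞) ^ k * g r := by
        rw [ENNReal.limsup_const_mul_of_ne_top (ENNReal.rpow_ne_top_of_nonneg' (by simpa using hc)
          (ENNReal.natCast_ne_top c)), limsup_comp_mul_div_rpow_eq hfr hc k, hg]

/-- Let `f : ℕ → [0,∞)` satisfy: for all `r s : ℕ` with `f r > 0` one has
`f (r + s) ≥ f s`.  Fix a real `k > 0` and define `g : ℕ → [0,∞]` by
`g r = limsup_{m → ∞} f (m * r) / m ^ k`.  Then `g (c * r) = c ^ k * g r` for all positive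
integers `c` and `r`. -/
theorem limsup_homogeneity
    (f : ℕ → ℝ≥0) (hf : ∀ r s : ℕ, 0 < f r → f s ≤ f (r + s))
    (k : ℝ) (hk : 0 < k)
    (g : ℕ → ℝ≥0∞)
    (hg : ∀ r : ℕ, g r =
      Filter.limsup (fun m : ℕ => (f (m * r) : ℝ≥0∞) / (m : ℝ≥0∞) ^ k) Filter.atTop)
    (c r : ℕ) (hc : 0 < c) (hr : 0 < r) :
    g (c * r) = (c : ℝ≥0∞) ^ k * g r :=
  limsup_homogeneity_general f hf k g hg c r hc
end

section
/- Let V be a finite-dimensional real normed vector space and let C ⊆ V be a closed convex cone that is salient (C ∩ (−C) = {0}) and full-dimensional (the interior of C is nonempty). Suppose f : V → [0,∞) satisfies: (1) f(e) > 0 for every e in the interior of C; (2) there is a constant c > 0 such that f(m·e) = m^c · f(e) for every rational m > 0 and every e ∈ C; (3) f(v+e) ≥ f(v) for all v and e in the interior of C. Then f is locally uniformly continuous on the interior of C: every point of the interior of C has a neighborhood contained in the interior of C on which f is uniformly continuous. -/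
/-- Let `V` be a finite-dimensional real normed vector space and `C ⊆ V` a
closed convex cone which is salient (`C ∩ (-C) = {0}`) and full-dimensional (nonempty
interior).  Suppose `f : V → [0,∞)` satisfies: `f` is positive on the interior of `C`;
`f` is homogeneous of some positive degree `c` with respect to positive rational scaling on
`C`; and `f (v + e) ≥ f v` for `v`, `e` in the interior of `C`.  Then `f` is locally
uniformly continuous on the interior of `C`: every point of the interior of `C` has a
neighborhood contained in the interior of `C` on which `f` is uniformly continuous. -/
theorem locally_uniformly_continuous_on_interior_of_cone
    {V : Type*} [NormedAddCommGroup V] [NormedSpace ℝ V] [FiniteDimensional ℝ V]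
    (C : Set V)
    (hcone : ∀ (a : ℝ), 0 ≤ a → ∀ x ∈ C, a • x ∈ C)
    (hconv : Convex ℝ C) (hclosed : IsClosed C)
    (hsalient : C ∩ (-C) = {0})
    (hfull : (interior C).Nonempty)
    (f : V → ℝ) (hf_nonneg : ∀ v, 0 ≤ f v)
    (h1 : ∀ e ∈ interior C, 0 < f e)
    (h2 : ∃ c : ℝ, 0 < c ∧ ∀ (m : ℚ), 0 < m → ∀ e ∈ C,
      f ((m : ℝ) • e) = (m : ℝ) ^ c * f e)
    (h3 : ∀ v ∈ interior C, ∀ e ∈ interior C, f v ≤ f (v + e)) :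
    ∀ x ∈ interior C, ∃ U ∈ nhds x, U ⊆ interior C ∧ UniformContinuousOn f U := by
  intro x hx
  obtain ⟨c, hc, hhom⟩ := h2
  -- C is closed under addition
  have hCC : ∀ a ∈ C, ∀ b ∈ C, a + b ∈ C := by
    intro a ha b hb
    have hmid : (1/2 : ℝ) • a + (1/2 : ℝ) • b ∈ C :=
      hconv ha hb (by norm_num) (by norm_num) (by norm_num)
    have h2m := hcone 2 (by norm_num) _ hmid
    have : (2:ℝ) • ((1/2 : ℝ) • a + (1/2 : ℝ) • b) = a + b := by module
    rwa [this] at h2m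
  -- interior C + C ⊆ interior C
  have hIntC : ∀ a ∈ interior C, ∀ b ∈ C, a + b ∈ interior C := by
    intro a ha b hb
    have hopen : IsOpen ((· + b) '' interior C) :=
      (isOpenMap_add_right b) _ isOpen_interior
    have hsub : (· + b) '' interior C ⊆ C := by
      rintro _ ⟨y, hy, rfl⟩
      exact hCC y (interior_subset hy) b hb
    exact interior_maximal hsub hopen ⟨a, ha, rfl⟩
  -- positive scaling preserves the interior
  have hSmulInt : ∀ a : ℝ, 0 < a → ∀ y ∈ interior C, a • y ∈ interior C := by
    intro a ha y hy
    have hopen : IsOpen ((a • ·) '' interior C) :=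
      (isOpenMap_smul₀ ha.ne') _ isOpen_interior
    have hsub : (a • ·) '' interior C ⊆ C := by
      rintro _ ⟨z, hz, rfl⟩
      exact hcone a ha.le z (interior_subset hz)
    exact interior_maximal hsub hopen ⟨y, hy, rfl⟩
  -- a ball around x inside the interior
  obtain ⟨r, hr, hball⟩ := Metric.mem_nhds_iff.mp (isOpen_interior.mem_nhds hx)
  have hUball : Metric.ball x (r/4) ⊆ interior C :=
    (Metric.ball_subset_ball (by linarith)).trans hball
  -- bound for f on the ball
  have hM : ∀ v ∈ Metric.ball x (r/4), f v ≤ (2:ℝ) ^ c * f x := by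
    intro v hv
    have hvI : v ∈ interior C := hUball hv
    have he : x + (x - v) ∈ interior C := by
      apply hball
      have : dist (x + (x - v)) x = dist x v := by
        rw [dist_eq_norm, dist_eq_norm]; congr 1; abel
      rw [Metric.mem_ball, this, dist_comm]
      have := Metric.mem_ball.mp hv
      linarith
    have hle := h3 v hvI _ he
    have heq : v + (x + (x - v)) = ((2:ℚ):ℝ) • x := by push_cast; module
    rw [heq] at hle
    have := hhom 2 (by norm_num) x (interior_subset hx)
    rw [this] at hle
    have h2 : ((2:ℚ):ℝ) = (2:ℝ) := by norm_num
    rwa [h2] at hle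
  -- key comparison estimate
  have key : ∀ s : ℚ, 0 < s → ∀ u ∈ Metric.ball x (r/4), ∀ v ∈ Metric.ball x (r/4),
      dist v u < (s:ℝ) * (r/4) → f u ≤ (1 + 2*(s:ℝ)) ^ c * f v := by
    intro s hs u hu v hv hd
    have hsR : (0:ℝ) < (s:ℝ) := by exact_mod_cast hs
    have huI : u ∈ interior C := hUball hu
    have hvI : v ∈ interior C := hUball hv
    -- e₁ = s•x + (v - u) ∈ interior C
    have hwball : x + (2/(s:ℝ)) • (v - u) ∈ interior C := by
      apply hball
      rw [Metric.mem_ball, dist_eq_norm]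
      have heq : x + (2/(s:ℝ)) • (v - u) - x = (2/(s:ℝ)) • (v - u) := by abel
      rw [heq, norm_smul, Real.norm_eq_abs, abs_of_pos (by positivity)]
      have hnd : ‖v - u‖ < (s:ℝ) * (r/4) := by rwa [dist_eq_norm] at hd
      have := mul_lt_mul_of_pos_left hnd (show (0:ℝ) < 2/(s:ℝ) by positivity)
      have heq2 : 2/(s:ℝ) * ((s:ℝ) * (r/4)) = r/2 := by field_simp; ring
      rw [heq2] at this
      linarith
    have hw : ((s:ℝ)/2) • x + (v - u) ∈ C := by
      have := hcone ((s:ℝ)/2) (by positivity) _ (interior_subset hwball)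
      have heq : ((s:ℝ)/2) • (x + (2/(s:ℝ)) • (v - u)) = ((s:ℝ)/2) • x + (v - u) := by
        rw [smul_add, smul_smul, show (s:ℝ)/2 * (2/(s:ℝ)) = 1 by field_simp, one_smul]
      rwa [heq] at this
    have he1 : (s:ℝ) • x + (v - u) ∈ interior C := by
      have hhalf : ((s:ℝ)/2) • x ∈ interior C := hSmulInt _ (by positivity) x hx
      have := hIntC _ hhalf _ hw
      have heq : ((s:ℝ)/2) • x + (((s:ℝ)/2) • x + (v - u)) = (s:ℝ) • x + (v - u) := by
        module
      rwa [heq] at this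
    have step1 := h3 u huI _ he1
    have heq1 : u + ((s:ℝ) • x + (v - u)) = v + (s:ℝ) • x := by abel
    rw [heq1] at step1
    -- e₂ = s•(2v - x) ∈ interior C
    have h2v : (2:ℝ) • v - x ∈ interior C := by
      apply hball
      rw [Metric.mem_ball, dist_eq_norm]
      have heq : (2:ℝ) • v - x - x = (2:ℝ) • (v - x) := by module
      rw [heq, norm_smul, Real.norm_eq_abs, abs_of_pos (by norm_num : (0:ℝ) < 2)]
      have := Metric.mem_ball.mp hv
      rw [dist_eq_norm] at this
      linarith
    have he2 : (s:ℝ) • ((2:ℝ) • v - x) ∈ interior C := hSmulInt _ hsR _ h2v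
    have hvs : v + (s:ℝ) • x ∈ interior C :=
      hIntC v hvI _ (hcone _ hsR.le x (interior_subset hx))
    have step2 := h3 _ hvs _ he2
    have heq2 : v + (s:ℝ) • x + (s:ℝ) • ((2:ℝ) • v - x) = (1 + 2*(s:ℝ)) • v := by module
    rw [heq2] at step2
    have step3 : f ((1 + 2*(s:ℝ)) • v) = (1 + 2*(s:ℝ)) ^ c * f v := by
      have := hhom (1 + 2*s) (by positivity) v (interior_subset hvI)
      push_cast at this
      convert this using 3 <;> push_cast <;> ring
    rw [step3] at step2
    linarith
  -- conclusion
  refine ⟨Metric.ball x (r/4), Metric.ball_mem_nhds x (by positivity), hUball, ?_⟩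
  rw [Metric.uniformContinuousOn_iff]
  intro ε hε
  set M : ℝ := (2:ℝ) ^ c * f x with hMdef
  have hM0 : 0 ≤ M := mul_nonneg (Real.rpow_nonneg (by norm_num) c) (hf_nonneg x)
  -- choose s small via continuity
  have hcont : ContinuousAt (fun t : ℝ => ((1 + 2*t) ^ c - 1) * M) 0 := by
    apply ContinuousAt.mul _ continuousAt_const
    apply ContinuousAt.sub _ continuousAt_const
    have hbase : ContinuousAt (fun t : ℝ => 1 + 2*t) 0 := by fun_prop
    exact hbase.rpow_const (Or.inl (by norm_num))
  have h00 : ((1 + 2*(0:ℝ)) ^ c - 1) * M = 0 := by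
    norm_num [Real.one_rpow]
  have hev : ∀ᶠ t in nhds (0:ℝ), ((1 + 2*t) ^ c - 1) * M < ε := by
    have ht : Filter.Tendsto (fun t : ℝ => ((1 + 2*t) ^ c - 1) * M) (nhds 0)
        (nhds 0) := by
      have := hcont.tendsto
      rwa [h00] at this
    exact ht.eventually_lt_const hε
  obtain ⟨s₀, hs₀, hsmall⟩ := Metric.eventually_nhds_iff.mp hev
  obtain ⟨s, hs1, hs2⟩ := exists_rat_btwn (half_pos hs₀)
  have hsQ : 0 < s := by exact_mod_cast hs1
  have hsR : (0:ℝ) < (s:ℝ) := by exact_mod_cast hs1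
  have hgs : ((1 + 2*(s:ℝ)) ^ c - 1) * M < ε := by
    apply hsmall
    rw [Real.dist_eq, sub_zero, abs_of_pos hsR]
    linarith
  set K : ℝ := (1 + 2*(s:ℝ)) ^ c with hKdef
  have hK1 : 1 ≤ K := by
    calc (1:ℝ) = 1 ^ c := (Real.one_rpow c).symm
    _ ≤ (1 + 2*(s:ℝ)) ^ c := Real.rpow_le_rpow (by norm_num) (by linarith) hc.le
  refine ⟨(s:ℝ) * (r/4), by positivity, ?_⟩
  intro u hu v hv hduv
  have k1 := key s hsQ u hu v hv (by rw [dist_comm]; exact hduv)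
  have k2 := key s hsQ v hv u hu hduv
  have m1 := hM u hu
  have m2 := hM v hv
  have e1 : K * f v - f v = (K - 1) * f v := by ring
  have e2 : K * f u - f u = (K - 1) * f u := by ring
  have b1 : (K - 1) * f v ≤ (K - 1) * M :=
    mul_le_mul_of_nonneg_left m2 (by linarith)
  have b2 : (K - 1) * f u ≤ (K - 1) * M :=
    mul_le_mul_of_nonneg_left m1 (by linarith)
  rw [Real.dist_eq, abs_sub_lt_iff]
  constructor <;> linarith
end
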